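/- Let N = 2M be an even natural number, and define the Jordan–Wigner Majorana matrices ψ : Fin N → Matrix (Fin M → Fin 2) (Fin M → Fin 2) ℂ by ψ_{2k+1} = σ3^{⊗k} ⊗ σ1 ⊗ 1^{⊗(M−k−1)} and ψ_{2k+2} = σ3^{⊗k} ⊗ σ2 ⊗ 1^{⊗(M−k−1)} for k = 0, …, M−1, and the fermion parity matrix Γ = σ3^{⊗M}. For A : Finset (Fin N) let Ψ A be the ordered (increasing) product of the ψ i over i ∈ A. Then for every n ≥ 1 and every weight function w : ℕ → ℝ: (1/2) · Σ over all n-tuples (A : Fin n → Finset (Fin N)) of (∏_k w (|A k|)) · (Complex.normSq (Matrix.trace (∏_k Ψ (A k))) + Complex.normSq (Matrix.trace (Γ * ∏_k Ψ (A k)))) = Σ over even s with 0 ≤ s ≤ N of (N.choose s) · (Σ_{l = 0}^{N} w l · Σ_{j = 0}^{min s l} (−1)^j · (s.choose j) · ((N − s).choose (l − j)))^n, where the matrix products ∏_k are taken in the order k = 0, 1, …, n−1. -/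

import Mathlib

/-!
Modulo phases, the Jordan–Wigner matrices are Pauli strings, whose classes live in the
`ZMod 2`-vector space `Fin M → Fin 2 → ZMod 2`. Hence `∏ₖ Ψ (A k)` is, up to a unimodular scalar,
the Pauli string of class `∑ᵢ cᵢ • ψᵢ`, where `cᵢ` counts the `k` with `i ∈ A k`. The classes of the
`ψᵢ` are linearly independent and add up to the class of `Γ`, so `|Tr ∏ₖ Ψ (A k)|²` and
`|Tr (Γ ∏ₖ Ψ (A k))|²` equal `4 ^ M` when all `cᵢ` are even, resp. odd, and vanish otherwise.
The sum of the two indicators is the character sum `2¹⁻ᴺ ∑_{|B| even} (-1) ^ ∑_{i ∈ B} cᵢ`.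
Exchanging the sums over `A` and `B` turns the sum over `A` into the `n`-th power of
`∑_{A'} w |A'| (-1) ^ |A' ∩ B|`, which depends only on `|B|` and is a weighted sum of
Krawtchouk polynomials.
-/

noncomputable def σ1 : Matrix (Fin 2) (Fin 2) ℂ := !![0, 1; 1, 0]
noncomputable def σ2 : Matrix (Fin 2) (Fin 2) ℂ := !![0, -Complex.I; Complex.I, 0]
noncomputable def σ3 : Matrix (Fin 2) (Fin 2) ℂ := !![1, 0; 0, -1]

/-- The Jordan–Wigner Majorana matrices on `M` qubits:
`ψ (2k) = σ3^{⊗k} ⊗ σ1 ⊗ 1^{⊗(M−k−1)}` and `ψ (2k+1) = σ3^{⊗k} ⊗ σ2 ⊗ 1^{⊗(M−k−1)}`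
(0-indexed). -/
noncomputable def jordanWigner (M : ℕ) (i : Fin (2 * M)) :
    Matrix (Fin M → Fin 2) (Fin M → Fin 2) ℂ :=
  Matrix.of fun r c => ∏ s : Fin M,
    (if (s : ℕ) < (i : ℕ) / 2 then σ3
     else if (s : ℕ) = (i : ℕ) / 2 then (if (i : ℕ) % 2 = 0 then σ1 else σ2)
     else 1) (r s) (c s)

/-- The fermion parity matrix `Γ = σ3^{⊗M}`. -/
noncomputable def fermionParity (M : ℕ) :
    Matrix (Fin M → Fin 2) (Fin M → Fin 2) ℂ :=
  Matrix.of fun r c => ∏ s : Fin M, σ3 (r s) (c s)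

/-- The Majorana string associated to a finite set `A`: the ordered product of the
Jordan–Wigner matrices over `i ∈ A`, taken in increasing order (with `Ψ ∅ = 1`). -/
noncomputable def jwString (M : ℕ) (A : Finset (Fin (2 * M))) :
    Matrix (Fin M → Fin 2) (Fin M → Fin 2) ℂ :=
  ((A.sort (· ≤ ·)).map (jordanWigner M)).prod

open Finset

namespace Matrix

variable {ι l m n R : Type*} [Fintype ι] [CommSemiring R]

def piKron (f : ι → Matrix m n R) : Matrix (ι → m) (ι → n) R :=
  of fun r c => ∏ s, f s (r s) (c s)

theorem piKron_mul [DecidableEq ι] [Fintype m] (f : ι → Matrix l m R) (g : ι → Matrix m n R) :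
    piKron f * piKron g = piKron fun s => f s * g s := by
  ext r c
  simp only [piKron, mul_apply, of_apply, prod_univ_sum, Fintype.piFinset_univ, prod_mul_distrib]

theorem piKron_one [DecidableEq ι] [DecidableEq n] :
    piKron (fun _ : ι => (1 : Matrix n n R)) = 1 := by
  ext r c
  by_cases h : r = c
  · subst h; simp [piKron]
  · obtain ⟨s, hs⟩ := Function.ne_iff.mp h
    rw [one_apply_ne h, piKron, of_apply]
    exact prod_eq_zero (mem_univ s) (one_apply_ne hs)

theorem piKron_smul (a : ι → R) (f : ι → Matrix m n R) :
    piKron (fun s => a s • f s) = (∏ s, a s) • piKron f := by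
  ext r c
  simp [piKron, prod_mul_distrib]

theorem trace_piKron [DecidableEq ι] [Fintype n] (f : ι → Matrix n n R) :
    (piKron f).trace = ∏ s, (f s).trace := by
  simp only [trace, diag, piKron, of_apply, prod_univ_sum, Fintype.piFinset_univ]

end Matrix

/-- The Pauli group modulo phases is `(ZMod 2)²`; `pauli v` is a representative of the class `v`,
with `σ3` in the class `σ1 + σ2`. -/
noncomputable def pauli (v : Fin 2 → ZMod 2) : Matrix (Fin 2) (Fin 2) ℂ :=
  if v = ![1, 0] then σ1 else if v = ![0, 1] then σ2 else if v = ![1, 1] then σ3 else 1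

theorem pauli_zero : pauli 0 = 1 := by
  rw [pauli, if_neg (by decide), if_neg (by decide), if_neg (by decide)]

theorem pauli_one : pauli 1 = σ3 := by
  rw [pauli, if_neg (by decide), if_neg (by decide), if_pos (by decide)]

theorem pauli_single_zero : pauli (Pi.single 0 1) = σ1 := by
  rw [pauli, if_pos (by decide)]

theorem pauli_single_one : pauli (Pi.single 1 1) = σ2 := by
  rw [pauli, if_neg (by decide), if_pos (by decide)]

theorem pauli_mul (v w : Fin 2 → ZMod 2) :
    ∃ u : ℂ, ‖u‖ = 1 ∧ pauli v * pauli w = u • pauli (v + w) := by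
  have cases : ∀ x : ZMod 2, x = 0 ∨ x = 1 := by decide
  have two : (1 + 1 : ZMod 2) = 0 := rfl
  obtain ⟨a, b, rfl⟩ : ∃ a b, v = ![a, b] := ⟨v 0, v 1, by ext i; fin_cases i <;> rfl⟩
  obtain ⟨c, d, rfl⟩ : ∃ c d, w = ![c, d] := ⟨w 0, w 1, by ext i; fin_cases i <;> rfl⟩
  rcases cases a with rfl | rfl <;> rcases cases b with rfl | rfl <;>
    rcases cases c with rfl | rfl <;> rcases cases d with rfl | rfl <;>
    first
    | refine ⟨1, by simp, ?_⟩; ext i j; fin_cases i <;> fin_cases j <;>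
        simp [pauli, σ1, σ2, σ3, two] <;> done
    | refine ⟨Complex.I, by simp, ?_⟩; ext i j; fin_cases i <;> fin_cases j <;>
        simp [pauli, σ1, σ2, σ3, two] <;> done
    | refine ⟨-Complex.I, by simp, ?_⟩; ext i j; fin_cases i <;> fin_cases j <;>
        simp [pauli, σ1, σ2, σ3, two]

theorem trace_pauli (v : Fin 2 → ZMod 2) : (pauli v).trace = if v = 0 then 2 else 0 := by
  have cases : ∀ x : ZMod 2, x = 0 ∨ x = 1 := by decide
  obtain ⟨a, b, rfl⟩ : ∃ a b, v = ![a, b] := ⟨v 0, v 1, by ext i; fin_cases i <;> rfl⟩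
  rcases cases a with rfl | rfl <;> rcases cases b with rfl | rfl <;>
    simp [pauli, σ1, σ2, σ3, Matrix.trace_fin_two, funext_iff, Fin.forall_fin_two]

section PauliString

variable {ι : Type*} [Fintype ι]

noncomputable def pauliString (v : ι → Fin 2 → ZMod 2) : Matrix (ι → Fin 2) (ι → Fin 2) ℂ :=
  Matrix.piKron fun s => pauli (v s)

theorem pauliString_zero [DecidableEq ι] : pauliString (0 : ι → Fin 2 → ZMod 2) = 1 := by
  simp only [pauliString, Pi.zero_apply, pauli_zero, Matrix.piKron_one]

theorem pauliString_mul [DecidableEq ι] (v w : ι → Fin 2 → ZMod 2) :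
    ∃ u : ℂ, ‖u‖ = 1 ∧ pauliString v * pauliString w = u • pauliString (v + w) := by
  choose u hu hmul using fun s => pauli_mul (v s) (w s)
  refine ⟨∏ s, u s, by simp [hu], ?_⟩
  simp only [pauliString, Matrix.piKron_mul, hmul, Matrix.piKron_smul, Pi.add_apply]

theorem trace_pauliString [DecidableEq ι] (v : ι → Fin 2 → ZMod 2) :
    (pauliString v).trace = if v = 0 then 2 ^ Fintype.card ι else 0 := by
  simp only [pauliString, Matrix.trace_piKron, trace_pauli, Fintype.prod_ite_zero, funext_iff,
    Pi.zero_apply, prod_const, card_univ]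

def IsPauliString (v : ι → Fin 2 → ZMod 2) (X : Matrix (ι → Fin 2) (ι → Fin 2) ℂ) : Prop :=
  ∃ u : ℂ, ‖u‖ = 1 ∧ X = u • pauliString v

theorem isPauliString_pauliString (v : ι → Fin 2 → ZMod 2) : IsPauliString v (pauliString v) :=
  ⟨1, norm_one, (one_smul ℂ _).symm⟩

namespace IsPauliString

variable [DecidableEq ι] {v w : ι → Fin 2 → ZMod 2} {X Y : Matrix (ι → Fin 2) (ι → Fin 2) ℂ}

theorem mul (hX : IsPauliString v X) (hY : IsPauliString w Y) :
    IsPauliString (v + w) (X * Y) := by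
  obtain ⟨a, ha, rfl⟩ := hX
  obtain ⟨b, hb, rfl⟩ := hY
  obtain ⟨c, hc, hvw⟩ := pauliString_mul v w
  refine ⟨a * b * c, by simp [ha, hb, hc], ?_⟩
  rw [Matrix.smul_mul, Matrix.mul_smul, hvw, smul_smul, smul_smul]

theorem list_prod {α : Type*} {L : List α} {f : α → ι → Fin 2 → ZMod 2}
    {g : α → Matrix (ι → Fin 2) (ι → Fin 2) ℂ} (h : ∀ a ∈ L, IsPauliString (f a) (g a)) :
    IsPauliString (L.map f).sum (L.map g).prod := by
  induction L with
  | nil => simpa [pauliString_zero] using isPauliString_pauliString (0 : ι → Fin 2 → ZMod 2)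
  | cons a L ih =>
    simpa using (h a (by simp)).mul (ih fun b hb => h b (by simp [hb]))

theorem normSq_trace (h : IsPauliString v X) :
    Complex.normSq X.trace = if v = 0 then 4 ^ Fintype.card ι else 0 := by
  obtain ⟨u, hu, rfl⟩ := h
  rw [Matrix.trace_smul, trace_pauliString, smul_eq_mul, Complex.normSq_mul,
    Complex.normSq_eq_norm_sq u, hu]
  split_ifs
  · rw [map_pow, Complex.normSq_ofNat, one_pow, one_mul]; norm_num
  · simp

end IsPauliString

end PauliString

/-- The class of the site-`s` factor of `ψ i`, indexed by `ℕ` so that its sums over `range` can be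
computed by induction. -/
def jwLabel (i s : ℕ) : Fin 2 → ZMod 2 :=
  if s < i / 2 then 1 else if s = i / 2 then Pi.single (Fin.ofNat 2 i) 1 else 0

def jwVector (M : ℕ) (i : Fin (2 * M)) : Fin M → Fin 2 → ZMod 2 := fun s => jwLabel i s

theorem jordanWigner_eq_pauliString (M : ℕ) (i : Fin (2 * M)) :
    jordanWigner M i = pauliString (jwVector M i) := by
  ext r c
  simp only [jordanWigner, pauliString, Matrix.piKron, Matrix.of_apply]
  refine prod_congr rfl fun s _ => ?_
  simp only [jwVector, jwLabel]
  split_ifs with h₁ h₂ h₃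
  · rw [pauli_one]
  · rw [show Fin.ofNat 2 i = 0 by ext; simp [h₃], pauli_single_zero]
  · rw [show Fin.ofNat 2 i = 1 by ext; simp; omega, pauli_single_one]
  · rw [pauli_zero]

theorem fermionParity_eq_pauliString (M : ℕ) : fermionParity M = pauliString 1 := by
  ext r c
  simp [fermionParity, pauliString, Matrix.piKron, pauli_one]

theorem sum_range_jwLabel (s m : ℕ) :
    ∑ i ∈ range (2 * m), jwLabel i s = if s < m then 1 else 0 := by
  induction m with
  | zero => simp
  | succ m ih =>
    have h₀ : Fin.ofNat 2 (2 * m) = 0 := by ext; simp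
    have h₁ : Fin.ofNat 2 (2 * m + 1) = 1 := by ext; simp
    rw [mul_add, mul_one, sum_range_succ, sum_range_succ, ih, jwLabel, jwLabel, h₀, h₁,
      show 2 * m / 2 = m by omega, show (2 * m + 1) / 2 = m by omega]
    rcases lt_trichotomy s m with h | rfl | h
    · simp only [h, if_true, show s < m + 1 by omega]
      decide
    · simp only [lt_irrefl, if_false, if_true, lt_add_one, zero_add]
      ext p; fin_cases p <;> simp
    · simp [show ¬ s < m by omega, show ¬ s < m + 1 by omega, show s ≠ m by omega]

theorem sum_jwVector (M : ℕ) : ∑ i, jwVector M i = 1 := by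
  ext s : 1
  simp only [Finset.sum_apply, jwVector]
  rw [Fin.sum_univ_eq_sum_range (fun i => jwLabel i s), sum_range_jwLabel, if_pos s.isLt]
  rfl

theorem jwLabel_of_lt {i j : ℕ} (h : j < i) : jwLabel j (i / 2) (Fin.ofNat 2 i) = 0 := by
  rw [jwLabel, if_neg (by omega)]
  split_ifs with h'
  · rw [Pi.single_apply, if_neg]
    rw [Fin.ext_iff, Fin.val_ofNat, Fin.val_ofNat]
    omega
  · rfl

theorem jwLabel_self (i : ℕ) : jwLabel i (i / 2) (Fin.ofNat 2 i) = 1 := by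
  simp [jwLabel]

theorem linearIndependent_jwVector (M : ℕ) : LinearIndependent (ZMod 2) (jwVector M) := by
  rw [Fintype.linearIndependent_iff]
  intro g hg i
  -- Downward induction: in slot `i % 2` of site `i / 2`, among the `ψ j` with `j ≤ i` only `ψ i`
  -- has a nonzero entry.
  induction i using WellFoundedGT.induction with
  | _ i ih =>
    have hi := congrFun (congrFun hg ⟨i / 2, by omega⟩) (Fin.ofNat 2 i)
    simp only [Finset.sum_apply, Pi.smul_apply, smul_eq_mul, jwVector, Pi.zero_apply] at hi
    rwa [sum_eq_single i (fun j _ hji => ?_) (by simp), jwLabel_self, mul_one] at hi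
    rcases lt_or_gt_of_ne hji with h | h
    · rw [jwLabel_of_lt (Fin.lt_def.mp h), mul_zero]
    · rw [ih j h, zero_mul]

theorem LinearIndependent.sum_nsmul_eq_zero_iff_even {ι V : Type*} [Fintype ι] [AddCommGroup V]
    [Module (ZMod 2) V] {v : ι → V} (hv : LinearIndependent (ZMod 2) v) (c : ι → ℕ) :
    ∑ i, c i • v i = 0 ↔ ∀ i, Even (c i) := by
  simp_rw [← Nat.cast_smul_eq_nsmul (ZMod 2), ← ZMod.natCast_eq_zero_iff_even]
  exact ⟨Fintype.linearIndependent_iff.mp hv _, fun h => by simp [h]⟩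

def coverCount {κ α : Type*} [Fintype κ] [DecidableEq α] (A : κ → Finset α) (i : α) : ℕ :=
  #{k | i ∈ A k}

section CoverCount

variable {κ α : Type*} [Fintype κ] [DecidableEq α] (A : κ → Finset α)

theorem sum_sum_eq_sum_coverCount_nsmul [Fintype α] {V : Type*} [AddCommMonoid V] (f : α → V) :
    ∑ k, ∑ i ∈ A k, f i = ∑ i, coverCount A i • f i := by
  rw [sum_comm' (t' := univ) (s' := fun i => {k | i ∈ A k}) (by simp)]
  simp [coverCount]

theorem sum_coverCount (B : Finset α) : ∑ i ∈ B, coverCount A i = ∑ k, #(B ∩ A k) := by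
  simpa [coverCount, bipartiteAbove, bipartiteBelow, filter_mem_eq_inter] using
    sum_card_bipartiteAbove_eq_sum_card_bipartiteBelow (s := B) (t := univ) (fun i k => i ∈ A k)

end CoverCount

section JordanWignerStrings

variable {M n : ℕ}

theorem isPauliString_jwString (A : Finset (Fin (2 * M))) :
    IsPauliString (∑ i ∈ A, jwVector M i) (jwString M A) := by
  have h := IsPauliString.list_prod (L := A.sort (· ≤ ·)) (f := jwVector M)
    (g := jordanWigner M) fun i _ => jordanWigner_eq_pauliString M i ▸ isPauliString_pauliString _
  rwa [((sort_perm_toList _ _).map _).sum_eq, sum_map_toList] at h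

theorem isPauliString_prod_jwString (A : Fin n → Finset (Fin (2 * M))) :
    IsPauliString (∑ i, coverCount A i • jwVector M i)
      (List.ofFn fun k => jwString M (A k)).prod := by
  rw [← sum_sum_eq_sum_coverCount_nsmul, ← List.sum_ofFn, List.ofFn_eq_map, List.ofFn_eq_map]
  exact IsPauliString.list_prod fun k _ => isPauliString_jwString (A k)

theorem normSq_trace_prod_jwString (A : Fin n → Finset (Fin (2 * M))) :
    Complex.normSq (List.ofFn fun k => jwString M (A k)).prod.trace =
      if ∀ i, Even (coverCount A i) then 4 ^ M else 0 := by
  simp only [(isPauliString_prod_jwString A).normSq_trace, Fintype.card_fin,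
    (linearIndependent_jwVector M).sum_nsmul_eq_zero_iff_even]

theorem normSq_trace_fermionParity_mul_prod_jwString (A : Fin n → Finset (Fin (2 * M))) :
    Complex.normSq (fermionParity M * (List.ofFn fun k => jwString M (A k)).prod).trace =
      if ∀ i, Even (coverCount A i + 1) then 4 ^ M else 0 := by
  have h := (fermionParity_eq_pauliString M ▸ isPauliString_pauliString 1).mul
    (isPauliString_prod_jwString A)
  rw [← sum_jwVector, ← sum_add_distrib] at h
  simp_rw [← succ_nsmul'] at h
  simp only [h.normSq_trace, Fintype.card_fin,
    (linearIndependent_jwVector M).sum_nsmul_eq_zero_iff_even]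

end JordanWignerStrings

section SignSums

variable {ι R : Type*} [Fintype ι] [CommRing R]

theorem sum_neg_one_pow_sum (c : ι → ℕ) :
    ∑ B : Finset ι, (-1 : R) ^ ∑ i ∈ B, c i =
      if ∀ i, Even (c i) then 2 ^ Fintype.card ι else 0 := by
  have h : ∀ i, 1 + (-1 : R) ^ c i = if Even (c i) then 2 else 0 := fun i => by
    by_cases hc : Even (c i)
    · rw [if_pos hc, hc.neg_one_pow, one_add_one_eq_two]
    · rw [if_neg hc, (Nat.not_even_iff_odd.mp hc).neg_one_pow, add_neg_cancel]
  simp_rw [← prod_pow_eq_pow_sum, ← powerset_univ, ← prod_one_add, h, Fintype.prod_ite_zero,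
    prod_const, card_univ]

theorem two_mul_sum_even_card (c : ι → ℕ) :
    2 * ∑ B : Finset ι with Even #B, (-1 : R) ^ ∑ i ∈ B, c i =
      (if ∀ i, Even (c i) then 2 ^ Fintype.card ι else 0) +
        if ∀ i, Even (c i + 1) then 2 ^ Fintype.card ι else 0 := by
  rw [← sum_neg_one_pow_sum, ← sum_neg_one_pow_sum, ← sum_add_distrib, sum_filter, mul_sum]
  refine sum_congr rfl fun B _ => ?_
  rw [sum_add_distrib, sum_const, smul_eq_mul, mul_one, pow_add]
  by_cases hB : Even #B
  · rw [if_pos hB, hB.neg_one_pow]; ring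
  · rw [if_neg hB, (Nat.not_even_iff_odd.mp hB).neg_one_pow]; ring

theorem sum_even_card_eq_sum_choose (g : ℕ → R) :
    ∑ B : Finset ι with Even #B, g #B =
      ∑ s ∈ (range (Fintype.card ι + 1)).filter Even, (Fintype.card ι).choose s * g s := by
  rw [sum_filter, sum_filter, ← powerset_univ,
    sum_powerset_apply_card fun m => if Even m then g m else 0, card_univ]
  refine sum_congr rfl fun s _ => ?_
  split_ifs <;> simp [nsmul_eq_mul]

end SignSums

theorem sum_finset_eq_sum_powerset_sum_powerset_compl {ι V : Type*} [Fintype ι] [DecidableEq ι]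
    [AddCommMonoid V] (B : Finset ι) (f : Finset ι → Finset ι → V) :
    ∑ A : Finset ι, f (A ∩ B) (A \ B) = ∑ P ∈ B.powerset, ∑ Q ∈ Bᶜ.powerset, f P Q := by
  rw [← sum_product']
  refine sum_nbij' (fun A => (A ∩ B, A \ B)) (fun p => p.1 ∪ p.2) (fun A _ => ?_) (by simp)
    (fun A _ => ?_) (fun ⟨P, Q⟩ h => ?_) (fun A _ => rfl)
  · rw [mem_product, mem_powerset, mem_powerset]
    exact ⟨inter_subset_right, fun x hx => mem_compl.2 (mem_sdiff.1 hx).2⟩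
  · ext x; simp only [mem_union, mem_inter, mem_sdiff]; tauto
  · simp only [mem_product, mem_powerset, subset_iff, mem_compl] at h
    ext x <;> simp only [mem_union, mem_inter, mem_sdiff] <;> grind

def krawtchouk (N l s : ℕ) : ℝ :=
  ∑ j ∈ range (min s l + 1), (-1 : ℝ) ^ j * (s.choose j : ℝ) * ((N - s).choose (l - j) : ℝ)

theorem sum_choose_mul_choose_eq_sum_krawtchouk {N s : ℕ} (hs : s ≤ N) (w : ℕ → ℝ) :
    ∑ j ∈ range (s + 1), ∑ m ∈ range (N - s + 1),
        (s.choose j : ℝ) * (N - s).choose m * ((-1) ^ j * w (j + m)) =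
      ∑ l ∈ range (N + 1), w l * krawtchouk N l s := by
  set H : ℕ → ℕ → ℝ := fun j m => (s.choose j : ℝ) * (N - s).choose m * ((-1) ^ j * w (j + m))
  have hl : ∀ l, w l * krawtchouk N l s = ∑ j ∈ range (l + 1), H j (l - j) := fun l => by
    rw [krawtchouk, mul_sum]
    refine (sum_congr rfl fun j hj => ?_).trans
      (sum_subset (range_subset_range.2 (by omega)) fun j hj hj' => ?_)
    · simp only [mem_range] at hj
      simp only [H, Nat.add_sub_cancel' (show j ≤ l by omega)]
      ring
    · simp only [mem_range] at hj hj'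
      simp [H, Nat.choose_eq_zero_of_lt (show s < j by omega)]
  simp_rw [hl, sum_range_diag_flip]
  rw [← sum_subset (range_subset_range.2 (by omega : s + 1 ≤ N + 1))
    (f := fun j => ∑ m ∈ range (N + 1 - j), H j m)]
  · refine sum_congr rfl fun j hj => sum_subset (range_subset_range.2 ?_) fun m hm hm' => ?_
    · simp only [mem_range] at hj; omega
    · simp only [mem_range] at hm hm'
      simp [Nat.choose_eq_zero_of_lt (show N - s < m by omega)]
  · intro j hj hj'
    simp only [mem_range] at hj hj'
    simp [H, Nat.choose_eq_zero_of_lt (show s < j by omega)]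

theorem sum_finset_mul_neg_one_pow_card_inter {ι : Type*} [Fintype ι] [DecidableEq ι]
    (w : ℕ → ℝ) (B : Finset ι) :
    ∑ A : Finset ι, w #A * (-1) ^ #(B ∩ A) =
      ∑ l ∈ range (Fintype.card ι + 1), w l * krawtchouk (Fintype.card ι) l #B := by
  rw [← sum_choose_mul_choose_eq_sum_krawtchouk (card_le_univ B)]
  calc ∑ A : Finset ι, w #A * (-1) ^ #(B ∩ A)
      = ∑ A : Finset ι, w (#(A ∩ B) + #(A \ B)) * (-1) ^ #(A ∩ B) := by
        simp_rw [card_inter_add_card_sdiff, inter_comm]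
    _ = ∑ P ∈ B.powerset, ∑ Q ∈ Bᶜ.powerset, w (#P + #Q) * (-1) ^ #P :=
        sum_finset_eq_sum_powerset_sum_powerset_compl B fun P Q => w (#P + #Q) * (-1) ^ #P
    _ = _ := by
        rw [sum_powerset_apply_card fun j => ∑ Q ∈ Bᶜ.powerset, w (j + #Q) * (-1) ^ j]
        refine sum_congr rfl fun j _ => ?_
        rw [sum_powerset_apply_card fun m => w (j + m) * (-1) ^ j, card_compl, nsmul_eq_mul,
          mul_sum]
        refine sum_congr rfl fun m _ => ?_
        rw [nsmul_eq_mul]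
        ring

theorem normSq_trace_add_normSq_trace_fermionParity_mul {M n : ℕ}
    (A : Fin n → Finset (Fin (2 * M))) :
    Complex.normSq (List.ofFn fun k => jwString M (A k)).prod.trace +
        Complex.normSq (fermionParity M * (List.ofFn fun k => jwString M (A k)).prod).trace =
      2 * ∑ B : Finset (Fin (2 * M)) with Even #B, ∏ k, (-1 : ℝ) ^ #(B ∩ A k) := by
  have h4 : (4 : ℝ) ^ M = 2 ^ Fintype.card (Fin (2 * M)) := by
    rw [Fintype.card_fin, pow_mul]; norm_num
  rw [normSq_trace_prod_jwString, normSq_trace_fermionParity_mul_prod_jwString, h4]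
  convert (two_mul_sum_even_card (coverCount A)).symm using 4 with B
  rw [prod_pow_eq_pow_sum, sum_coverCount]

theorem brownian_SYK_moment_general (M n : ℕ) (w : ℕ → ℝ) :
    (1 / 2 : ℝ) *
        ∑ A : Fin n → Finset (Fin (2 * M)),
          (∏ k, w ((A k).card)) *
            (Complex.normSq
                (Matrix.trace ((List.ofFn fun k => jwString M (A k)).prod))
              + Complex.normSq
                  (Matrix.trace
                    (fermionParity M * (List.ofFn fun k => jwString M (A k)).prod)))
      = ∑ s ∈ (Finset.range (2 * M + 1)).filter (fun s => Even s),
          ((2 * M).choose s : ℝ) *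
            (∑ l ∈ Finset.range (2 * M + 1), w l *
                ∑ j ∈ Finset.range (min s l + 1),
                  (-1 : ℝ) ^ j * (s.choose j : ℝ) * ((2 * M - s).choose (l - j) : ℝ)) ^ n := by
  calc _ = ∑ B : Finset (Fin (2 * M)) with Even #B,
          ∑ A : Fin n → Finset (Fin (2 * M)), ∏ k, w #(A k) * (-1) ^ #(B ∩ A k) := by
        simp_rw [normSq_trace_add_normSq_trace_fermionParity_mul, mul_left_comm _ (2 : ℝ),
          ← mul_sum]
        rw [← mul_assoc, one_div_mul_cancel two_ne_zero, one_mul]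
        simp_rw [mul_sum, ← prod_mul_distrib]
        exact sum_comm
    _ = ∑ B : Finset (Fin (2 * M)) with Even #B,
          (∑ l ∈ range (2 * M + 1), w l * krawtchouk (2 * M) l #B) ^ n := by
        refine sum_congr rfl fun B _ => ?_
        rw [← Fintype.prod_sum fun _ A => w #A * (-1) ^ #(B ∩ A), prod_const, card_univ,
          Fintype.card_fin, sum_finset_mul_neg_one_pow_card_inter, Fintype.card_fin]
    _ = _ := by
        rw [sum_even_card_eq_sum_choose
          fun s => (∑ l ∈ range (2 * M + 1), w l * krawtchouk (2 * M) l s) ^ n, Fintype.card_fin]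
        rfl

theorem brownian_SYK_moment (M n : ℕ) (hn : 1 ≤ n) (w : ℕ → ℝ) :
    (1 / 2 : ℝ) *
        ∑ A : Fin n → Finset (Fin (2 * M)),
          (∏ k, w ((A k).card)) *
            (Complex.normSq
                (Matrix.trace ((List.ofFn fun k => jwString M (A k)).prod))
              + Complex.normSq
                  (Matrix.trace
                    (fermionParity M * (List.ofFn fun k => jwString M (A k)).prod)))
      = ∑ s ∈ (Finset.range (2 * M + 1)).filter (fun s => Even s),
          ((2 * M).choose s : ℝ) *
            (∑ l ∈ Finset.range (2 * M + 1), w l *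
                ∑ j ∈ Finset.range (min s l + 1),
                  (-1 : ℝ) ^ j * (s.choose j : ℝ) * ((2 * M - s).choose (l - j) : ℝ)) ^ n :=
  brownian_SYK_moment_general M n w
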